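/- Let F(z) = 1 − (1/8)e^{−2z} + (1/4)e^{−z} − (9/4)e^{z} + (9/8)e^{2z}. Then: (i) F(−log 3) = 0 and F'(−log 3) = 1; (ii) F(0) = 0, F'(0) = 0, and F''(0) = 2; (iii) F(z) > 0 for every z with −log 3 < z < 0; and (iv) F satisfies (1/4)F''''(z) − (5/4)F''(z) + F(z) = 1 and 𝓑(F)(z) = 0 for all z ∈ ℝ. -/

import Mathlib

open Real

/-- The quadratic third-order operator
`𝓑(F) = (−(1/2)F'' + (3/2)F' + F − 1)·((1/2)F'' − (3/2)F' + F − 1)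
        + F'·((1/2)F''' − (3/2)F'' + F')`. -/
noncomputable def Bop (F : ℝ → ℝ) (z : ℝ) : ℝ :=
  (-(1/2) * iteratedDeriv 2 F z + (3/2) * deriv F z + F z - 1) *
      ((1/2) * iteratedDeriv 2 F z - (3/2) * deriv F z + F z - 1)
    + deriv F z * ((1/2) * iteratedDeriv 3 F z - (3/2) * iteratedDeriv 2 F z + deriv F z)

/-- The profile function of the Taub-bolt metric. -/
noncomputable def Ftaubbolt (z : ℝ) : ℝ :=
  1 - (1/8) * exp (-2*z) + (1/4) * exp (-z) - (9/4) * exp z + (9/8) * exp (2*z)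

/-!
Writing `u = exp z`, the profile is the Laurent polynomial
`F = (u - 1)² (3u - 1)(3u + 1) / (8u²)`: the double root at `u = 1` gives the cusp
condition at `z = 0`, the simple root at `u = 1/3` the bolt at `z = -log 3`, and the
sign of the factors gives positivity in between. Since `F - 1` is a combination of
`e^{±z}, e^{±2z}`, whose exponents are the roots of `k⁴/4 - 5k²/4 + 1 = (k² - 1)(k² - 4)/4`,
it solves the linear equation; Bach-flatness is a direct computation in `u`.
-/

noncomputable def expLaurent (m₂ m₁ c p₁ p₂ : ℝ) (z : ℝ) : ℝ :=
  m₂ * exp (-2 * z) + m₁ * exp (-z) + c + p₁ * exp z + p₂ * exp (2 * z)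

section expLaurent

variable (m₂ m₁ c p₁ p₂ : ℝ)

theorem hasDerivAt_expLaurent (z : ℝ) :
    HasDerivAt (expLaurent m₂ m₁ c p₁ p₂) (expLaurent (-2 * m₂) (-m₁) 0 p₁ (2 * p₂) z) z := by
  have hexp (k : ℝ) : HasDerivAt (fun x => exp (k * x)) (exp (k * z) * k) z := by
    simpa using ((hasDerivAt_id z).const_mul k).exp
  have h := (((((hexp (-2)).const_mul m₂).add ((hexp (-1)).const_mul m₁)).add_const c).add
    ((hexp 1).const_mul p₁)).add ((hexp 2).const_mul p₂)
  refine (h.congr_deriv ?_).congr_of_eventuallyEq (.of_forall fun x => ?_)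
  · simp only [expLaurent]; ring_nf
  · simp [expLaurent]

theorem deriv_expLaurent :
    deriv (expLaurent m₂ m₁ c p₁ p₂) = expLaurent (-2 * m₂) (-m₁) 0 p₁ (2 * p₂) :=
  funext fun z => (hasDerivAt_expLaurent m₂ m₁ c p₁ p₂ z).deriv

theorem iteratedDeriv_expLaurent {n : ℕ} (hn : n ≠ 0) :
    iteratedDeriv n (expLaurent m₂ m₁ c p₁ p₂) =
      expLaurent ((-2) ^ n * m₂) ((-1) ^ n * m₁) 0 p₁ (2 ^ n * p₂) := by
  induction n with
  | zero => exact absurd rfl hn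
  | succ n ih =>
    rcases eq_or_ne n 0 with rfl | hn'
    · simp [deriv_expLaurent]
    · rw [iteratedDeriv_succ, ih hn', deriv_expLaurent]
      congr 1 <;> ring

theorem expLaurent_apply_of_exp_eq {z u : ℝ} (hu : exp z = u) :
    expLaurent m₂ m₁ c p₁ p₂ z = m₂ / u ^ 2 + m₁ / u + c + p₁ * u + p₂ * u ^ 2 := by
  have h2 : exp (2 * z) = u ^ 2 := by rw [← hu, ← exp_nat_mul]; norm_num
  have hm2 : exp (-2 * z) = (u ^ 2)⁻¹ := by rw [neg_mul, exp_neg, h2]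
  simp only [expLaurent, exp_neg, hu, h2, hm2, div_eq_mul_inv]

theorem expLaurent_linear_ode (z : ℝ) :
    (1/4) * iteratedDeriv 4 (expLaurent m₂ m₁ c p₁ p₂) z
      - (5/4) * iteratedDeriv 2 (expLaurent m₂ m₁ c p₁ p₂) z
      + expLaurent m₂ m₁ c p₁ p₂ z = c := by
  simp only [iteratedDeriv_expLaurent _ _ _ _ _ four_ne_zero,
    iteratedDeriv_expLaurent _ _ _ _ _ two_ne_zero, expLaurent]
  ring

end expLaurent

theorem Ftaubbolt_eq_expLaurent : Ftaubbolt = expLaurent (-1/8) (1/4) 1 (-9/4) (9/8) := by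
  funext z; simp only [Ftaubbolt, expLaurent]; ring

theorem Ftaubbolt_apply_of_exp_eq {z u : ℝ} (hu : exp z = u) :
    Ftaubbolt z = (u - 1) ^ 2 * (3 * u - 1) * (3 * u + 1) / (8 * u ^ 2) := by
  have hu0 : u ≠ 0 := hu ▸ (exp_pos z).ne'
  rw [Ftaubbolt_eq_expLaurent, expLaurent_apply_of_exp_eq _ _ _ _ _ hu]
  field_simp
  ring

theorem Ftaubbolt_pos {z : ℝ} (h₁ : -log 3 < z) (h₂ : z < 0) : 0 < Ftaubbolt z := by
  have hlo : 3⁻¹ < exp z := by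
    simpa [exp_neg, exp_log] using exp_lt_exp.mpr h₁
  have hhi : exp z < 1 := exp_lt_one_iff.mpr h₂
  rw [Ftaubbolt_apply_of_exp_eq rfl]
  have hsq : 0 < (exp z - 1) ^ 2 := by nlinarith
  exact div_pos (mul_pos (mul_pos hsq (by linarith)) (by positivity)) (by positivity)

theorem Bop_Ftaubbolt (z : ℝ) : Bop Ftaubbolt z = 0 := by
  have hu0 : exp z ≠ 0 := (exp_pos z).ne'
  rw [Bop, ← iteratedDeriv_one, Ftaubbolt_eq_expLaurent]
  simp only [iteratedDeriv_expLaurent _ _ _ _ _ one_ne_zero,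
    iteratedDeriv_expLaurent _ _ _ _ _ two_ne_zero,
    iteratedDeriv_expLaurent _ _ _ _ _ three_ne_zero,
    expLaurent_apply_of_exp_eq _ _ _ _ _ rfl]
  field_simp
  ring

/-- properties of the Taub-bolt profile function: the bolting condition
at `z = −log 3`, the ALF condition at `z = 0`, positivity on `(−log 3, 0)`, and
Bach-flatness. -/
theorem taubbolt_profile_properties :
    (Ftaubbolt (-Real.log 3) = 0 ∧ deriv Ftaubbolt (-Real.log 3) = 1) ∧
    (Ftaubbolt 0 = 0 ∧ deriv Ftaubbolt 0 = 0 ∧ iteratedDeriv 2 Ftaubbolt 0 = 2) ∧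
    (∀ z : ℝ, -Real.log 3 < z → z < 0 → 0 < Ftaubbolt z) ∧
    ((∀ z : ℝ, (1/4) * iteratedDeriv 4 Ftaubbolt z - (5/4) * iteratedDeriv 2 Ftaubbolt z
        + Ftaubbolt z = 1) ∧
      (∀ z : ℝ, Bop Ftaubbolt z = 0)) := by
  have h₃ : exp (-log 3) = 3⁻¹ := by rw [exp_neg, exp_log three_pos]
  have h₀ : exp 0 = 1 := exp_zero
  rw [← iteratedDeriv_one]
  refine ⟨⟨?_, ?_⟩, ⟨?_, ?_, ?_⟩, fun z => Ftaubbolt_pos,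
    fun z => Ftaubbolt_eq_expLaurent ▸ expLaurent_linear_ode _ _ _ _ _ z, Bop_Ftaubbolt⟩
  all_goals
    simp only [Ftaubbolt_eq_expLaurent, iteratedDeriv_expLaurent _ _ _ _ _ one_ne_zero,
      iteratedDeriv_expLaurent _ _ _ _ _ two_ne_zero, expLaurent_apply_of_exp_eq _ _ _ _ _ h₃,
      expLaurent_apply_of_exp_eq _ _ _ _ _ h₀]
    norm_num
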